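/- arXiv:1611.04680 — 4 statements merged into one kernel-verified Lean document; each statement's English description precedes it below -/
import Mathlib

section
/- Let (Ω, 𝓕, ℙ) be an atomless probability space on a Polish space. For any two probability measures m₁, m₂ on ℝ^d with finite second moments satisfying 𝒲₂(m₁, m₂) < ε, and any random variable ξ ∈ L²(Ω; ℝ^d) with law m₁, there exists a random variable η ∈ L²(Ω; ℝ^d) with law m₂ such that (𝔼|ξ − η|²)^{1/2} < ε. -/
open MeasureTheory
open scoped ENNReal
open Set Filter Topology
open scoped Function

/-- The second-order Wasserstein distance on measures on `ℝ^d`,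
defined as infimum over couplings of the square root of the quadratic transport cost. -/
noncomputable def W2 {d : ℕ} (μ ν : Measure (EuclideanSpace ℝ (Fin d))) : ℝ≥0∞ :=
  ⨅ γ ∈ {γ : Measure (EuclideanSpace ℝ (Fin d) × EuclideanSpace ℝ (Fin d)) |
      γ.map Prod.fst = μ ∧ γ.map Prod.snd = ν},
    (∫⁻ p, (‖p.1 - p.2‖₊ : ℝ≥0∞) ^ 2 ∂γ) ^ (1/2 : ℝ)

lemma exists_measure_Iic_lt (μ : Measure ℝ) [IsFiniteMeasure μ] {c : ℝ≥0∞} (hc : 0 < c) :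
    ∃ x : ℝ, μ (Iic x) < c := by
  by_contra h
  push_neg at h
  have h1 := tendsto_measure_iInter_atTop (μ := μ) (s := fun n : ℕ => Iic (-(n : ℝ)))
      (fun n => nullMeasurableSet_Iic)
      (fun m n hmn => Iic_subset_Iic.2 (neg_le_neg (Nat.cast_le.2 hmn)))
      ⟨0, measure_ne_top _ _⟩
  have h2 : ⋂ n : ℕ, Iic (-(n : ℝ)) = (∅ : Set ℝ) := by
    ext x
    simp only [mem_iInter, mem_Iic, mem_empty_iff_false, iff_false, not_forall, not_le]
    obtain ⟨n, hn⟩ := exists_nat_gt (-x)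
    exact ⟨n, by linarith⟩
  rw [h2, measure_empty] at h1
  exact hc.ne' (le_zero_iff.mp (ge_of_tendsto h1 (Eventually.of_forall fun n => h _)))

lemma exists_lt_measure_Iic (μ : Measure ℝ) {c : ℝ≥0∞} (hc : c < μ univ) :
    ∃ x : ℝ, c < μ (Iic x) :=
  ((tendsto_measure_Iic_atTop μ).eventually (lt_mem_nhds hc)).exists

lemma exists_quantile_map (μ : Measure ℝ) [IsFiniteMeasure μ] :
    ∃ f : ℝ → ℝ, Measurable f ∧
      (volume.restrict (Ioo 0 (μ univ).toReal)).map f = μ := by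
  classical
  set M : ℝ := (μ univ).toReal with hMdef
  set G : ℝ → ℝ := fun x => (μ (Iic x)).toReal with hGdef
  have hGmono : Monotone G := fun a b hab =>
    ENNReal.toReal_mono (measure_ne_top _ _) (measure_mono (Iic_subset_Iic.2 hab))
  have hGle : ∀ x, G x ≤ M := fun x =>
    ENNReal.toReal_mono (measure_ne_top _ _) (measure_mono (subset_univ _))
  have hG0 : ∀ x, 0 ≤ G x := fun _ => ENNReal.toReal_nonneg
  have hofG : ∀ x, μ (Iic x) = ENNReal.ofReal (G x) := fun x =>
    (ENNReal.ofReal_toReal (measure_ne_top _ _)).symm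
  have hofM : μ univ = ENNReal.ofReal M := (ENNReal.ofReal_toReal (measure_ne_top _ _)).symm
  set S : ℝ → Set ℝ := fun t => {x | t ≤ G x} with hSdef
  set Q : ℝ → ℝ := fun t => sInf (S t) with hQdef
  have hSne : ∀ t : ℝ, 0 ≤ t → t < M → (S t).Nonempty := by
    intro t ht0 htM
    rcases eq_or_lt_of_le ht0 with h | h
    · exact ⟨0, by simp only [hSdef, mem_setOf_eq, ← h]; exact hG0 0⟩
    · obtain ⟨x, hx⟩ := exists_lt_measure_Iic μ (c := ENNReal.ofReal t)
        (by rw [hofM]; exact (ENNReal.ofReal_lt_ofReal_iff (lt_of_le_of_lt ht0 htM)).2 htM)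
      refine ⟨x, ?_⟩
      rw [hofG] at hx
      exact ((ENNReal.ofReal_lt_ofReal_iff_of_nonneg ht0).1 hx).le
  have hSbdd : ∀ t : ℝ, 0 < t → BddBelow (S t) := by
    intro t ht
    obtain ⟨x₀, hx₀⟩ := exists_measure_Iic_lt μ (c := ENNReal.ofReal t) (ENNReal.ofReal_pos.2 ht)
    refine ⟨x₀, fun y hy => ?_⟩
    by_contra hlt
    push_neg at hlt
    have : μ (Iic y) ≤ μ (Iic x₀) := measure_mono (Iic_subset_Iic.2 hlt.le)
    rw [hofG y] at this
    exact absurd (lt_of_le_of_lt ((ENNReal.ofReal_le_ofReal hy).trans this) hx₀) (lt_irrefl _)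
  have hGQ : ∀ t : ℝ, 0 < t → t < M → t ≤ G (Q t) := by
    intro t ht htM
    have h1 : ∀ n : ℕ, ENNReal.ofReal t ≤ μ (Iic (Q t + 1 / (n + 1))) := by
      intro n
      have hpos : (0 : ℝ) < 1 / (n + 1) := by positivity
      obtain ⟨s, hsS, hslt⟩ := exists_lt_of_csInf_lt (hSne t ht.le htM)
        (lt_add_of_pos_right (Q t) hpos)
      calc ENNReal.ofReal t ≤ ENNReal.ofReal (G s) := ENNReal.ofReal_le_ofReal hsS
        _ = μ (Iic s) := (hofG s).symm
        _ ≤ μ (Iic (Q t + 1 / (n + 1))) := measure_mono (Iic_subset_Iic.2 hslt.le)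
    have h2 : Iic (Q t) = ⋂ n : ℕ, Iic (Q t + 1 / (n + 1)) := by
      ext y
      simp only [mem_iInter, mem_Iic]
      constructor
      · intro hy n
        have : (0 : ℝ) < 1 / (n + 1) := by positivity
        linarith
      · intro hy
        by_contra hlt
        push_neg at hlt
        obtain ⟨n, hn⟩ := exists_nat_one_div_lt (show (0:ℝ) < y - Q t by linarith)
        have := hy n
        push_cast at hn ⊢
        linarith
    have h3 := tendsto_measure_iInter_atTop (μ := μ)
      (s := fun n : ℕ => Iic (Q t + 1 / (n + 1)))
      (fun n => nullMeasurableSet_Iic)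
      (fun m n hmn => Iic_subset_Iic.2 (by
        have : (1 : ℝ) / (n + 1) ≤ 1 / (m + 1) :=
          one_div_le_one_div_of_le (by positivity) (by exact_mod_cast Nat.add_le_add_right hmn 1)
        linarith))
      ⟨0, measure_ne_top _ _⟩
    rw [← h2] at h3
    have h4 : ENNReal.ofReal t ≤ μ (Iic (Q t)) :=
      ge_of_tendsto h3 (Eventually.of_forall h1)
    rw [hofG] at h4
    exact (ENNReal.ofReal_le_ofReal_iff (hG0 _)).1 h4
  have hGalois : ∀ t : ℝ, 0 < t → t < M → ∀ x : ℝ, (Q t ≤ x ↔ t ≤ G x) := by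
    intro t ht htM x
    constructor
    · intro h
      exact (hGQ t ht htM).trans (hGmono h)
    · intro h
      exact csInf_le (hSbdd t ht) h
  set f : ℝ → ℝ := fun t => if t ∈ Ioo (0:ℝ) M then Q t else 0 with hfdef
  have hpre : ∀ x : ℝ, f ⁻¹' Iic x ∩ Ioo 0 M = Ioo 0 M ∩ Iic (G x) := by
    intro x
    ext t
    simp only [mem_inter_iff, mem_preimage, mem_Iic, hfdef]
    by_cases ht : t ∈ Ioo (0:ℝ) M
    · simp only [if_pos ht, ht, true_and, and_true]
      exact hGalois t ht.1 ht.2 x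
    · simp [ht]
  have hfmeas : Measurable f := by
    apply measurable_of_Iic
    intro x
    by_cases hx : (0 : ℝ) ≤ x
    · have : f ⁻¹' Iic x = (Ioo 0 M ∩ Iic (G x)) ∪ (Ioo (0:ℝ) M)ᶜ := by
        ext t
        simp only [mem_preimage, mem_Iic, hfdef, mem_union, mem_inter_iff, mem_compl_iff]
        by_cases ht : t ∈ Ioo (0:ℝ) M
        · simp only [if_pos ht, ht, true_and, not_true, or_false]
          exact hGalois t ht.1 ht.2 x
        · simp [ht, hx]
      rw [this]
      exact ((measurableSet_Ioo.inter measurableSet_Iic).union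
        measurableSet_Ioo.compl)
    · have : f ⁻¹' Iic x = Ioo 0 M ∩ Iic (G x) := by
        ext t
        simp only [mem_preimage, mem_Iic, hfdef, mem_inter_iff]
        by_cases ht : t ∈ Ioo (0:ℝ) M
        · simp only [if_pos ht, ht, true_and]
          exact hGalois t ht.1 ht.2 x
        · simp [ht, hx]
      rw [this]
      exact measurableSet_Ioo.inter measurableSet_Iic
  refine ⟨f, hfmeas, ?_⟩
  have hvol : ∀ x : ℝ, volume (Ioo 0 M ∩ Iic (G x)) = ENNReal.ofReal (G x) := by
    intro x
    apply le_antisymm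
    · have h1 : Ioo 0 M ∩ Iic (G x) ⊆ Ioc 0 (G x) := fun t ht => ⟨ht.1.1, ht.2⟩
      calc volume (Ioo 0 M ∩ Iic (G x)) ≤ volume (Ioc 0 (G x)) := measure_mono h1
        _ = ENNReal.ofReal (G x) := by rw [Real.volume_Ioc, sub_zero]
    · have h2 : Ioo 0 (G x) ⊆ Ioo 0 M ∩ Iic (G x) := fun t ht =>
        ⟨⟨ht.1, lt_of_lt_of_le ht.2 (hGle x)⟩, ht.2.le⟩
      calc ENNReal.ofReal (G x) = volume (Ioo 0 (G x)) := by rw [Real.volume_Ioo, sub_zero]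
        _ ≤ volume (Ioo 0 M ∩ Iic (G x)) := measure_mono h2
  haveI : IsFiniteMeasure ((volume.restrict (Ioo (0:ℝ) M)).map f) := by
    constructor
    rw [Measure.map_apply hfmeas MeasurableSet.univ]
    calc (volume.restrict (Ioo (0:ℝ) M)) (f ⁻¹' univ) ≤ volume (Ioo (0:ℝ) M) := by
          rw [Measure.restrict_apply (hfmeas MeasurableSet.univ)]
          exact measure_mono inter_subset_right
      _ < ⊤ := by rw [Real.volume_Ioo]; exact ENNReal.ofReal_lt_top
  refine Measure.ext_of_Iic _ μ fun x => ?_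
  rw [Measure.map_apply hfmeas measurableSet_Iic,
    Measure.restrict_apply (hfmeas measurableSet_Iic), hpre x, hvol x, hofG x]

lemma le_measure_Iic_of_forall (ν : Measure ℝ) [IsFiniteMeasure ν] {a : ℝ} {c : ℝ≥0∞}
    (h : ∀ n : ℕ, c ≤ ν (Iic (a + 1 / (n + 1)))) : c ≤ ν (Iic a) := by
  have h2 : Iic a = ⋂ n : ℕ, Iic (a + 1 / (n + 1)) := by
    ext y
    simp only [mem_iInter, mem_Iic]
    constructor
    · intro hy n
      have : (0 : ℝ) < 1 / (n + 1) := by positivity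
      linarith
    · intro hy
      by_contra hlt
      push_neg at hlt
      obtain ⟨n, hn⟩ := exists_nat_one_div_lt (show (0:ℝ) < y - a by linarith)
      have := hy n
      linarith
  have h3 := tendsto_measure_iInter_atTop (μ := ν)
    (s := fun n : ℕ => Iic (a + 1 / (n + 1)))
    (fun n => nullMeasurableSet_Iic)
    (fun m n hmn => Iic_subset_Iic.2 (by
      have : (1 : ℝ) / (n + 1) ≤ 1 / (m + 1) :=
        one_div_le_one_div_of_le (by positivity) (by exact_mod_cast Nat.add_le_add_right hmn 1)
      linarith))
    ⟨0, measure_ne_top _ _⟩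
  rw [← h2] at h3
  exact ge_of_tendsto h3 (Eventually.of_forall h)

lemma measure_Iio_le_of_forall (ν : Measure ℝ) {a : ℝ} {c : ℝ≥0∞}
    (h : ∀ n : ℕ, ν (Iic (a - 1 / (n + 1))) ≤ c) : ν (Iio a) ≤ c := by
  have h2 : Iio a = ⋃ n : ℕ, Iic (a - 1 / (n + 1)) := by
    ext y
    simp only [mem_iUnion, mem_Iic, mem_Iio]
    constructor
    · intro hy
      obtain ⟨n, hn⟩ := exists_nat_one_div_lt (show (0:ℝ) < a - y by linarith)
      exact ⟨n, by linarith⟩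
    · rintro ⟨n, hn⟩
      have : (0 : ℝ) < 1 / (n + 1) := by positivity
      linarith
  have h3 := tendsto_measure_iUnion_atTop (μ := ν)
    (s := fun n : ℕ => Iic (a - 1 / (n + 1)))
    (fun m n hmn => Iic_subset_Iic.2 (by
      have : (1 : ℝ) / (n + 1) ≤ 1 / (m + 1) :=
        one_div_le_one_div_of_le (by positivity) (by exact_mod_cast Nat.add_le_add_right hmn 1)
      linarith))
  rw [← h2] at h3
  exact le_of_tendsto h3 (Eventually.of_forall h)

lemma exists_cdf_map (ν : Measure ℝ) [IsFiniteMeasure ν] [NullSingletonClass ν] :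
    ∃ g : ℝ → ℝ, Measurable g ∧
      ν.map g = volume.restrict (Ioo 0 (ν univ).toReal) := by
  classical
  set M : ℝ := (ν univ).toReal with hMdef
  set F : ℝ → ℝ := fun x => (ν (Iic x)).toReal with hFdef
  have hFmono : Monotone F := fun a b hab =>
    ENNReal.toReal_mono (measure_ne_top _ _) (measure_mono (Iic_subset_Iic.2 hab))
  have hFle : ∀ x, F x ≤ M := fun x =>
    ENNReal.toReal_mono (measure_ne_top _ _) (measure_mono (subset_univ _))
  have hF0 : ∀ x, 0 ≤ F x := fun _ => ENNReal.toReal_nonneg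
  have hofF : ∀ x, ν (Iic x) = ENNReal.ofReal (F x) := fun x =>
    (ENNReal.ofReal_toReal (measure_ne_top _ _)).symm
  have hofM : ν univ = ENNReal.ofReal M := (ENNReal.ofReal_toReal (measure_ne_top _ _)).symm
  have hFmeas : Measurable F := hFmono.measurable
  have key : ∀ t : ℝ, ν {x | F x ≤ t} = ENNReal.ofReal (min t M) := by
    intro t
    by_cases htM : M ≤ t
    · have h1 : {x | F x ≤ t} = univ := eq_univ_of_forall fun x => (hFle x).trans htM
      rw [h1, hofM, min_eq_right htM]
    push_neg at htM
    by_cases ht0 : t < 0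
    · have h1 : {x | F x ≤ t} = (∅ : Set ℝ) := by
        ext x
        simp only [mem_setOf_eq, mem_empty_iff_false, iff_false, not_le]
        exact lt_of_lt_of_le ht0 (hF0 x)
      rw [h1, measure_empty, min_eq_left htM.le, ENNReal.ofReal_eq_zero.2 ht0.le]
    push_neg at ht0
    rw [min_eq_left htM.le]
    set S : Set ℝ := {x | F x ≤ t} with hSdef
    obtain ⟨b, hb⟩ := exists_lt_measure_Iic ν (c := ENNReal.ofReal t)
      (by rw [hofM]; exact (ENNReal.ofReal_lt_ofReal_iff (lt_of_le_of_lt ht0 htM)).2 htM)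
    have htFb : t < F b := by
      rw [hofF] at hb
      exact (ENNReal.ofReal_lt_ofReal_iff_of_nonneg ht0).1 hb
    have hbdd : BddAbove S := by
      refine ⟨b, fun y hy => ?_⟩
      by_contra hlt
      push_neg at hlt
      exact absurd (lt_of_lt_of_le htFb ((hFmono hlt.le).trans hy)) (lt_irrefl _)
    by_cases hSne : S.Nonempty
    · set a : ℝ := sSup S with hadef
      have hIio : Iio a ⊆ S := by
        intro y hy
        obtain ⟨s, hsS, hys⟩ := exists_lt_of_lt_csSup hSne hy
        exact le_trans (hFmono hys.le) hsS
      have hSIic : S ⊆ Iic a := fun y hy => le_csSup hbdd hy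
      have hνS : ν S = ν (Iic a) := by
        refine le_antisymm (measure_mono hSIic) ?_
        calc ν (Iic a) = ν (Iio a) := (measure_congr (Iio_ae_eq_Iic (μ := ν) (a := a))).symm
          _ ≤ ν S := measure_mono hIio
      have hupper : ν (Iic a) ≤ ENNReal.ofReal t := by
        rw [← measure_congr (Iio_ae_eq_Iic (μ := ν) (a := a))]
        refine measure_Iio_le_of_forall ν fun n => ?_
        have hmem : a - 1 / (n + 1) ∈ S := hIio (by
          have : (0 : ℝ) < 1 / (n + 1) := by positivity
          simp only [mem_Iio]; linarith)
        rw [hofF]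
        exact ENNReal.ofReal_le_ofReal hmem
      have hlower : ENNReal.ofReal t ≤ ν (Iic a) := by
        refine le_measure_Iic_of_forall ν fun n => ?_
        have hnmem : a + 1 / (n + 1) ∉ S := by
          intro hmem
          have h1 := le_csSup hbdd hmem
          have : (0 : ℝ) < 1 / (n + 1) := by positivity
          linarith
        have : t ≤ F (a + 1 / (n + 1)) := le_of_not_ge hnmem
        rw [hofF]
        exact ENNReal.ofReal_le_ofReal this
      rw [hνS]
      exact le_antisymm hupper hlower
    · rw [not_nonempty_iff_eq_empty] at hSne
      rw [hSne, measure_empty]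
      have ht0' : t ≤ 0 := by
        by_contra hpos
        push_neg at hpos
        obtain ⟨x, hx⟩ := exists_measure_Iic_lt ν (c := ENNReal.ofReal t)
          (ENNReal.ofReal_pos.2 hpos)
        rw [hofF] at hx
        have : F x < t := (ENNReal.ofReal_lt_ofReal_iff hpos).1 hx
        exact absurd (eq_empty_iff_forall_notMem.1 hSne x) (by simp only [hSdef, mem_setOf_eq, not_le, not_lt]; exact this.le)
      rw [ENNReal.ofReal_eq_zero.2 ht0']
  have hvol : ∀ t : ℝ, volume (Ioo 0 M ∩ Iic t) = ENNReal.ofReal (min t M) := by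
    intro t
    apply le_antisymm
    · have h1 : Ioo 0 M ∩ Iic t ⊆ Ioc 0 (min t M) := fun y hy =>
        ⟨hy.1.1, le_min hy.2 hy.1.2.le⟩
      calc volume (Ioo 0 M ∩ Iic t) ≤ volume (Ioc 0 (min t M)) := measure_mono h1
        _ = ENNReal.ofReal (min t M) := by rw [Real.volume_Ioc, sub_zero]
    · have h2 : Ioo 0 (min t M) ⊆ Ioo 0 M ∩ Iic t := fun y hy =>
        ⟨⟨hy.1, lt_of_lt_of_le hy.2 (min_le_right _ _)⟩, hy.2.le.trans (min_le_left _ _)⟩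
      calc ENNReal.ofReal (min t M) = volume (Ioo 0 (min t M)) := by
            rw [Real.volume_Ioo, sub_zero]
        _ ≤ volume (Ioo 0 M ∩ Iic t) := measure_mono h2
  refine ⟨F, hFmeas, ?_⟩
  haveI : IsFiniteMeasure (ν.map F) := by
    constructor
    rw [Measure.map_apply hFmeas MeasurableSet.univ]
    exact lt_of_le_of_lt (measure_mono (subset_univ _)) (measure_lt_top ν univ)
  refine Measure.ext_of_Iic _ _ fun t => ?_
  rw [Measure.map_apply hFmeas measurableSet_Iic,
    Measure.restrict_apply measurableSet_Iic, inter_comm, hvol t]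
  exact key t

lemma exists_map_eq_of_noAtoms {Ω' : Type*} {E' : Type*} [MeasurableSpace Ω']
    [StandardBorelSpace Ω'] [MeasurableSpace E'] [StandardBorelSpace E'] [Nonempty E']
    (P : Measure Ω') [IsFiniteMeasure P] [NullSingletonClass P]
    (μ : Measure E') [IsFiniteMeasure μ] (hmass : μ univ = P univ) :
    ∃ f : Ω' → E', Measurable f ∧ P.map f = μ := by
  classical
  set e₁ : Ω' → ℝ := MeasureTheory.embeddingReal Ω' with he₁def
  have he₁ : MeasurableEmbedding e₁ := MeasureTheory.measurableEmbedding_embeddingReal Ω'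
  set ν : Measure ℝ := P.map e₁ with hνdef
  haveI : IsFiniteMeasure ν := by
    constructor
    rw [hνdef, Measure.map_apply he₁.measurable MeasurableSet.univ]
    exact lt_of_le_of_lt (measure_mono (subset_univ _)) (measure_lt_top P univ)
  haveI : NullSingletonClass ν := by
    constructor
    intro x
    rw [hνdef, Measure.map_apply he₁.measurable (measurableSet_singleton x)]
    have : (e₁ ⁻¹' {x}).Subsingleton := fun a ha b hb =>
      he₁.injective (ha.trans hb.symm)
    exact this.measure_zero P
  have hνuniv : ν univ = P univ := by
    rw [hνdef, Measure.map_apply he₁.measurable MeasurableSet.univ, preimage_univ]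
  set e₂ : E' → ℝ := MeasureTheory.embeddingReal E' with he₂def
  have he₂ : MeasurableEmbedding e₂ := MeasureTheory.measurableEmbedding_embeddingReal E'
  set μ' : Measure ℝ := μ.map e₂ with hμ'def
  haveI : IsFiniteMeasure μ' := by
    constructor
    rw [hμ'def, Measure.map_apply he₂.measurable MeasurableSet.univ]
    exact lt_of_le_of_lt (measure_mono (subset_univ _)) (measure_lt_top μ univ)
  have hμ'univ : μ' univ = μ univ := by
    rw [hμ'def, Measure.map_apply he₂.measurable MeasurableSet.univ, preimage_univ]
  obtain ⟨g, hgmeas, hg⟩ := exists_cdf_map ν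
  obtain ⟨h, hhmeas, hh⟩ := exists_quantile_map μ'
  have hMM : (ν univ).toReal = (μ' univ).toReal := by rw [hνuniv, hμ'univ, hmass]
  obtain ⟨r, hrmeas, hr⟩ := he₂.exists_measurable_extend measurable_id
    (fun _ => ‹Nonempty E'›)
  refine ⟨r ∘ h ∘ g ∘ e₁, hrmeas.comp (hhmeas.comp (hgmeas.comp he₁.measurable)), ?_⟩
  have step1 : P.map (r ∘ h ∘ g ∘ e₁) = ((ν.map g).map h).map r := by
    rw [hνdef, Measure.map_map hgmeas he₁.measurable,
      Measure.map_map hhmeas (hgmeas.comp he₁.measurable),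
      Measure.map_map hrmeas (hhmeas.comp (hgmeas.comp he₁.measurable))]
  rw [step1, hg, hMM, hh, hμ'def, Measure.map_map hrmeas he₂.measurable, hr,
    Measure.map_id]

lemma rpow_half_eq_eLpNorm {α : Type*} [MeasurableSpace α] (μ : Measure α) {F : Type*}
    [NormedAddCommGroup F] (f : α → F) :
    (∫⁻ x, (‖f x‖₊ : ℝ≥0∞) ^ 2 ∂μ) ^ (1 / 2 : ℝ) = eLpNorm f 2 μ := by
  rw [eLpNorm_eq_lintegral_rpow_enorm_toReal two_ne_zero ENNReal.ofNat_ne_top]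
  have h2 : ((2 : ℝ≥0∞).toReal) = (2 : ℝ) := by norm_num
  rw [h2]
  congr 1
  apply lintegral_congr
  intro x
  rw [show (2 : ℝ) = ((2 : ℕ) : ℝ) by norm_num, ENNReal.rpow_natCast, enorm_eq_nnnorm]

/-- On an atomless Polish probability space, if `𝒲₂(m₁, m₂) < ε` and `ξ ∈ L²` has law `m₁`,
then there is `η ∈ L²` with law `m₂` and `(𝔼|ξ − η|²)^{1/2} < ε`. -/
theorem stmt0 {d : ℕ} {Ω : Type*} [MeasurableSpace Ω] [TopologicalSpace Ω]
    [PolishSpace Ω] [BorelSpace Ω] (ℙ : Measure Ω) [IsProbabilityMeasure ℙ]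
    [NullSingletonClass ℙ]
    (m₁ m₂ : Measure (EuclideanSpace ℝ (Fin d)))
    [IsProbabilityMeasure m₁] [IsProbabilityMeasure m₂]
    (hm₁ : ∫⁻ y, (‖y‖₊ : ℝ≥0∞) ^ 2 ∂m₁ < ⊤) (hm₂ : ∫⁻ y, (‖y‖₊ : ℝ≥0∞) ^ 2 ∂m₂ < ⊤)
    (ε : ℝ) (hW : W2 m₁ m₂ < ENNReal.ofReal ε)
    (ξ : Ω → EuclideanSpace ℝ (Fin d)) (hξmeas : Measurable ξ)
    (hξ : MemLp ξ 2 ℙ) (hlaw : ℙ.map ξ = m₁) :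
    ∃ η : Ω → EuclideanSpace ℝ (Fin d), Measurable η ∧ MemLp η 2 ℙ ∧
      ℙ.map η = m₂ ∧
      (∫⁻ ω, (‖ξ ω - η ω‖₊ : ℝ≥0∞) ^ 2 ∂ℙ) ^ (1/2 : ℝ) < ENNReal.ofReal ε := by
  classical
  -- ε is positive
  have hε : 0 < ε := by
    by_contra h
    push_neg at h
    rw [ENNReal.ofReal_eq_zero.2 h] at hW
    exact ENNReal.not_lt_zero hW
  -- extract a good coupling
  have hW' := hW
  rw [W2, iInf_lt_iff] at hW'
  obtain ⟨γ, hγ'⟩ := hW'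
  rw [iInf_lt_iff] at hγ'
  obtain ⟨hmem, hcost⟩ := hγ'
  obtain ⟨hγ1, hγ2⟩ := hmem
  haveI hγprob : IsProbabilityMeasure γ := by
    constructor
    have h1 : γ Set.univ = (γ.map Prod.fst) Set.univ := by
      rw [Measure.map_apply measurable_fst MeasurableSet.univ, Set.preimage_univ]
    rw [h1, hγ1, measure_univ]
  set L : ℝ≥0∞ := (∫⁻ p, (‖p.1 - p.2‖₊ : ℝ≥0∞) ^ 2 ∂γ) ^ (1/2 : ℝ) with hLdef
  have hLne : L ≠ ⊤ := (hcost.trans ENNReal.ofReal_lt_top).ne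
  have hLlt : L.toReal < ε := (ENNReal.lt_ofReal_iff_toReal_lt hLne).1 hcost
  have hLtoReal : ENNReal.ofReal L.toReal = L := ENNReal.ofReal_toReal hLne
  set δ : ℝ := (ε - L.toReal) / 3 with hδdef
  have hδpos : 0 < δ := by
    rw [hδdef]
    have : 0 < ε - L.toReal := by linarith
    positivity
  -- dense sequence and partition of E into small cells
  set z : ℕ → EuclideanSpace ℝ (Fin d) := TopologicalSpace.denseSeq (EuclideanSpace ℝ (Fin d)) with hzdef
  have hz : DenseRange z := TopologicalSpace.denseRange_denseSeq (EuclideanSpace ℝ (Fin d))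
  have hcov : ∀ x : EuclideanSpace ℝ (Fin d), ∃ k, x ∈ Metric.closedBall (z k) δ := by
    intro x
    obtain ⟨k, hk⟩ := hz.exists_dist_lt x hδpos
    exact ⟨k, Metric.mem_closedBall.2 hk.le⟩
  set s : ℕ → Set (EuclideanSpace ℝ (Fin d)) := fun k => Metric.closedBall (z k) δ \
    ⋃ (j : ℕ) (_ : j < k), Metric.closedBall (z j) δ with hsdef
  have hs_meas : ∀ k, MeasurableSet (s k) := fun k =>
    measurableSet_closedBall.diff
      (MeasurableSet.iUnion fun j => MeasurableSet.iUnion fun _ => measurableSet_closedBall)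
  have hmem_s : ∀ (x : EuclideanSpace ℝ (Fin d)) (k : ℕ), x ∈ s k ↔
      (x ∈ Metric.closedBall (z k) δ ∧ ∀ j < k, x ∉ Metric.closedBall (z j) δ) := by
    intro x k
    simp only [hsdef, Set.mem_diff, Set.mem_iUnion, not_exists, exists_prop]
    tauto
  set K : Ω → ℕ := fun ω => Nat.find (hcov (ξ ω)) with hKdef
  have hKs : ∀ (ω : Ω) (k : ℕ), K ω = k ↔ ξ ω ∈ s k := by
    intro ω k
    rw [hKdef, Nat.find_eq_iff, hmem_s]
  have hKmem : ∀ ω, ξ ω ∈ s (K ω) := fun ω => (hKs ω (K ω)).1 rfl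
  have hdisj' : ∀ j k, j < k → Disjoint (s j) (s k) := by
    intro j k hlt
    rw [Set.disjoint_left]
    intro x hxj hxk
    exact ((hmem_s x k).1 hxk).2 j hlt ((hmem_s x j).1 hxj).1
  have hs_disj : Pairwise (Disjoint on s) := by
    intro j k hjk
    rcases hjk.lt_or_gt with h | h
    · exact hdisj' j k h
    · exact (hdisj' k j h).symm
  have hs_cover : (⋃ k, s k) = Set.univ := by
    refine Set.eq_univ_of_forall fun x => Set.mem_iUnion.2 ⟨Nat.find (hcov x), ?_⟩
    rw [hmem_s]
    exact ⟨Nat.find_spec (hcov x), fun j hj => Nat.find_min (hcov x) hj⟩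
  set A : ℕ → Set Ω := fun k => ξ ⁻¹' (s k) with hAdef
  have hA_meas : ∀ k, MeasurableSet (A k) := fun k => hξmeas (hs_meas k)
  have hA_eq : ∀ k, A k = K ⁻¹' {k} := by
    intro k
    ext ω
    rw [hAdef]
    simp only [Set.mem_preimage, Set.mem_singleton_iff]
    exact (hKs ω k).symm
  have hKmeas : Measurable K :=
    measurable_to_countable' fun k => (hA_eq k) ▸ hA_meas k
  have hA_disj : Pairwise (Disjoint on A) := by
    intro j k hjk
    rw [Function.onFun, hA_eq j, hA_eq k, Set.disjoint_left]
    intro ω hj hk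
    rw [Set.mem_preimage, Set.mem_singleton_iff] at hj hk
    exact hjk (hj ▸ hk ▸ rfl)
  have hA_cover : (⋃ k, A k) = Set.univ :=
    Set.eq_univ_of_forall fun ω => Set.mem_iUnion.2 ⟨K ω, hKmem ω⟩
  -- the conditional measures on the second coordinate
  set μk : ℕ → Measure (EuclideanSpace ℝ (Fin d)) := fun k => (γ.restrict (s k ×ˢ Set.univ)).map Prod.snd with hμkdef
  have hμk_apply : ∀ k (B : Set (EuclideanSpace ℝ (Fin d))), MeasurableSet B →
      μk k B = γ (Prod.snd ⁻¹' B ∩ s k ×ˢ Set.univ) := by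
    intro k B hB
    rw [hμkdef, Measure.map_apply measurable_snd hB,
      Measure.restrict_apply (measurable_snd hB)]
  have hmassk : ∀ k, μk k Set.univ = ℙ (A k) := by
    intro k
    rw [hμk_apply k Set.univ MeasurableSet.univ, Set.preimage_univ, Set.univ_inter]
    have h1 : s k ×ˢ (Set.univ : Set (EuclideanSpace ℝ (Fin d))) = Prod.fst ⁻¹' (s k) := Set.prod_univ
    rw [h1, ← Measure.map_apply measurable_fst (hs_meas k), hγ1, ← hlaw,
      Measure.map_apply hξmeas (hs_meas k)]
  -- realize the conditional measures on each cell
  have hrealize : ∀ k, ∃ f : Ω → EuclideanSpace ℝ (Fin d), Measurable f ∧ (ℙ.restrict (A k)).map f = μk k := by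
    intro k
    haveI : IsFiniteMeasure (μk k) := by
      constructor
      rw [hμk_apply k Set.univ MeasurableSet.univ]
      exact lt_of_le_of_lt (measure_mono (Set.subset_univ _)) (measure_lt_top γ _)
    exact exists_map_eq_of_noAtoms (ℙ.restrict (A k)) (μk k)
      (by rw [hmassk k, Measure.restrict_apply_univ])
  choose f hfmeas hfmap using hrealize
  -- define η
  set η : Ω → EuclideanSpace ℝ (Fin d) := fun ω => f (K ω) ω with hηdef
  have hη_eq : ∀ k, ∀ ω ∈ A k, η ω = f k ω := by
    intro k ω hω
    have hk : K ω = k := by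
      rw [hA_eq k, Set.mem_preimage, Set.mem_singleton_iff] at hω
      exact hω
    rw [hηdef]
    simp only [hk]
  have hpreη : ∀ B : Set (EuclideanSpace ℝ (Fin d)), η ⁻¹' B = ⋃ k, (A k ∩ f k ⁻¹' B) := by
    intro B
    ext ω
    simp only [Set.mem_preimage, Set.mem_iUnion, Set.mem_inter_iff]
    constructor
    · intro h
      refine ⟨K ω, hKmem ω, ?_⟩
      rwa [hηdef] at h
    · rintro ⟨k, hωA, hfB⟩
      rw [show η ω = f k ω from hη_eq k ω hωA]
      exact hfB
  have hηmeas : Measurable η := by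
    intro B hB
    rw [hpreη]
    exact MeasurableSet.iUnion fun k => (hA_meas k).inter (hfmeas k hB)
  -- law of η is m₂
  have hηlaw : ℙ.map η = m₂ := by
    refine Measure.ext fun B hB => ?_
    rw [Measure.map_apply hηmeas hB, hpreη]
    have hdisjB : Pairwise (Disjoint on fun k => A k ∩ f k ⁻¹' B) := fun j k hjk =>
      ((hA_disj hjk).mono Set.inter_subset_left Set.inter_subset_left)
    rw [measure_iUnion hdisjB fun k => (hA_meas k).inter (hfmeas k hB)]
    have h1 : ∀ k, ℙ (A k ∩ f k ⁻¹' B) = μk k B := by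
      intro k
      rw [Set.inter_comm, ← Measure.restrict_apply (hfmeas k hB),
        ← Measure.map_apply (hfmeas k) hB, hfmap k]
    simp_rw [h1]
    have h2 : ∀ k, μk k B = γ (Prod.snd ⁻¹' B ∩ s k ×ˢ Set.univ) := fun k =>
      hμk_apply k B hB
    simp_rw [h2]
    have hdisjP : Pairwise (Disjoint on fun k => Prod.snd ⁻¹' B ∩ s k ×ˢ Set.univ) := by
      intro j k hjk
      refine Disjoint.mono Set.inter_subset_right Set.inter_subset_right ?_
      rw [Set.disjoint_left]
      rintro ⟨x, y⟩ hxj hxk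
      rw [Set.mem_prod] at hxj hxk
      exact Set.disjoint_left.1 (hs_disj hjk) hxj.1 hxk.1
    rw [← measure_iUnion hdisjP fun k =>
      (measurable_snd hB).inter ((hs_meas k).prod MeasurableSet.univ)]
    rw [← Set.inter_iUnion, ← Set.iUnion_prod_const, hs_cover, Set.univ_prod_univ,
      Set.inter_univ, ← hγ2, Measure.map_apply measurable_snd hB]
  -- η is in L²
  have hsqint : ∫⁻ ω, (‖η ω‖₊ : ℝ≥0∞) ^ 2 ∂ℙ = ∫⁻ y, (‖y‖₊ : ℝ≥0∞) ^ 2 ∂m₂ := by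
    rw [← hηlaw, lintegral_map (by fun_prop) hηmeas]
  have hηmem : MemLp η 2 ℙ := by
    refine ⟨hηmeas.aestronglyMeasurable, ?_⟩
    rw [← rpow_half_eq_eLpNorm, hsqint]
    exact ENNReal.rpow_lt_top_of_nonneg (by norm_num) hm₂.ne
  refine ⟨η, hηmeas, hηmem, hηlaw, ?_⟩
  -- the distance estimate
  set c : Ω → EuclideanSpace ℝ (Fin d) := fun ω => z (K ω) with hcdef
  have hcmeas : Measurable c := measurable_from_nat.comp hKmeas
  rw [rpow_half_eq_eLpNorm]
  have htri : eLpNorm (fun ω => ξ ω - η ω) 2 ℙ ≤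
      eLpNorm (fun ω => ξ ω - c ω) 2 ℙ + eLpNorm (fun ω => c ω - η ω) 2 ℙ := by
    have heq : (fun ω => ξ ω - η ω) = (fun ω => (ξ ω - c ω) + (c ω - η ω)) := by
      funext ω
      rw [sub_add_sub_cancel]
    rw [heq]
    exact eLpNorm_add_le (hξmeas.sub hcmeas).aestronglyMeasurable
      (hcmeas.sub hηmeas).aestronglyMeasurable one_le_two
  have h1 : eLpNorm (fun ω => ξ ω - c ω) 2 ℙ ≤ ENNReal.ofReal δ := by
    have hb : ∀ ω, ‖ξ ω - c ω‖ ≤ δ := by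
      intro ω
      rw [hcdef, ← dist_eq_norm]
      exact Metric.mem_closedBall.1 ((hmem_s (ξ ω) (K ω)).1 (hKmem ω)).1
    calc eLpNorm (fun ω => ξ ω - c ω) 2 ℙ
        ≤ ℙ Set.univ ^ (2 : ℝ≥0∞).toReal⁻¹ * ENNReal.ofReal δ :=
          eLpNorm_le_of_ae_bound (Filter.Eventually.of_forall hb)
      _ = ENNReal.ofReal δ := by rw [measure_univ, ENNReal.one_rpow, one_mul]
  have h2 : eLpNorm (fun ω => c ω - η ω) 2 ℙ ≤ L + ENNReal.ofReal δ := by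
    have hI : ∫⁻ ω, (‖c ω - η ω‖₊ : ℝ≥0∞) ^ 2 ∂ℙ ≤
        ∫⁻ p, ((‖p.1 - p.2‖₊ : ℝ≥0∞) + ENNReal.ofReal δ) ^ 2 ∂γ := by
      have e1 : ∫⁻ ω, (‖c ω - η ω‖₊ : ℝ≥0∞) ^ 2 ∂ℙ =
          ∑' k, ∫⁻ ω in A k, (‖c ω - η ω‖₊ : ℝ≥0∞) ^ 2 ∂ℙ := by
        rw [← setLIntegral_univ, ← hA_cover, lintegral_iUnion hA_meas hA_disj]
      have e2 : ∀ k, ∫⁻ ω in A k, (‖c ω - η ω‖₊ : ℝ≥0∞) ^ 2 ∂ℙ =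
          ∫⁻ p in s k ×ˢ Set.univ, (‖z k - p.2‖₊ : ℝ≥0∞) ^ 2 ∂γ := by
        intro k
        have step1 : ∫⁻ ω in A k, (‖c ω - η ω‖₊ : ℝ≥0∞) ^ 2 ∂ℙ =
            ∫⁻ ω in A k, (‖z k - f k ω‖₊ : ℝ≥0∞) ^ 2 ∂ℙ := by
          refine setLIntegral_congr_fun (hA_meas k) ?_
          intro ω hω
          beta_reduce
          have hk : K ω = k := by
            rw [hA_eq k, Set.mem_preimage, Set.mem_singleton_iff] at hω
            exact hω
          rw [hη_eq k ω (by rwa [hA_eq k, Set.mem_preimage, Set.mem_singleton_iff]), hcdef]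
          simp only [hk]
        have step2 : ∫⁻ ω in A k, (‖z k - f k ω‖₊ : ℝ≥0∞) ^ 2 ∂ℙ =
            ∫⁻ y, (‖z k - y‖₊ : ℝ≥0∞) ^ 2 ∂(μk k) := by
          rw [← hfmap k, lintegral_map (by fun_prop) (hfmeas k)]
        have step3 : ∫⁻ y, (‖z k - y‖₊ : ℝ≥0∞) ^ 2 ∂(μk k) =
            ∫⁻ p in s k ×ˢ Set.univ, (‖z k - p.2‖₊ : ℝ≥0∞) ^ 2 ∂γ := by
          rw [hμkdef, lintegral_map (by fun_prop) measurable_snd]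
        rw [step1, step2, step3]
      have e3 : ∀ k, ∫⁻ p in s k ×ˢ Set.univ, (‖z k - p.2‖₊ : ℝ≥0∞) ^ 2 ∂γ ≤
          ∫⁻ p in s k ×ˢ Set.univ, ((‖p.1 - p.2‖₊ : ℝ≥0∞) + ENNReal.ofReal δ) ^ 2 ∂γ := by
        intro k
        refine setLIntegral_mono (by fun_prop) ?_
        rintro ⟨x, y⟩ hp
        rw [Set.mem_prod] at hp
        have hx : ‖z k - x‖ ≤ δ := by
          rw [← dist_eq_norm, dist_comm]
          exact Metric.mem_closedBall.1 ((hmem_s x k).1 hp.1).1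
        have hnorm : ‖z k - y‖ ≤ ‖x - y‖ + δ := by
          calc ‖z k - y‖ = ‖(z k - x) + (x - y)‖ := by rw [sub_add_sub_cancel]
            _ ≤ ‖z k - x‖ + ‖x - y‖ := norm_add_le _ _
            _ ≤ ‖x - y‖ + δ := by linarith
        calc ((‖z k - y‖₊ : ℝ≥0∞)) ^ 2 = (ENNReal.ofReal ‖z k - y‖) ^ 2 := by
              rw [ofReal_norm, enorm_eq_nnnorm]
          _ ≤ (ENNReal.ofReal (‖x - y‖ + δ)) ^ 2 := by
              exact pow_le_pow_left₀ (by positivity) (ENNReal.ofReal_le_ofReal hnorm) 2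
          _ = ((‖x - y‖₊ : ℝ≥0∞) + ENNReal.ofReal δ) ^ 2 := by
              rw [ENNReal.ofReal_add (norm_nonneg _) hδpos.le, ofReal_norm, enorm_eq_nnnorm]
      have e4 : ∑' k, ∫⁻ p in s k ×ˢ Set.univ,
          ((‖p.1 - p.2‖₊ : ℝ≥0∞) + ENNReal.ofReal δ) ^ 2 ∂γ =
          ∫⁻ p, ((‖p.1 - p.2‖₊ : ℝ≥0∞) + ENNReal.ofReal δ) ^ 2 ∂γ := by
        rw [← lintegral_iUnion (fun k => (hs_meas k).prod MeasurableSet.univ)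
          (fun j k hjk => by
            refine Set.disjoint_left.2 ?_
            rintro ⟨x, y⟩ hxj hxk
            rw [Set.mem_prod] at hxj hxk
            exact Set.disjoint_left.1 (hs_disj hjk) hxj.1 hxk.1),
          ← Set.iUnion_prod_const, hs_cover, Set.univ_prod_univ, setLIntegral_univ]
      calc ∫⁻ ω, (‖c ω - η ω‖₊ : ℝ≥0∞) ^ 2 ∂ℙ
          = ∑' k, ∫⁻ ω in A k, (‖c ω - η ω‖₊ : ℝ≥0∞) ^ 2 ∂ℙ := e1
        _ = ∑' k, ∫⁻ p in s k ×ˢ Set.univ, (‖z k - p.2‖₊ : ℝ≥0∞) ^ 2 ∂γ := by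
            exact tsum_congr e2
        _ ≤ ∑' k, ∫⁻ p in s k ×ˢ Set.univ,
            ((‖p.1 - p.2‖₊ : ℝ≥0∞) + ENNReal.ofReal δ) ^ 2 ∂γ := Summable.tsum_le_tsum e3
              ENNReal.summable ENNReal.summable
        _ = ∫⁻ p, ((‖p.1 - p.2‖₊ : ℝ≥0∞) + ENNReal.ofReal δ) ^ 2 ∂γ := e4
    have hJ : (∫⁻ p, ((‖p.1 - p.2‖₊ : ℝ≥0∞) + ENNReal.ofReal δ) ^ 2 ∂γ) ^ (1/2 : ℝ) ≤
        L + ENNReal.ofReal δ := by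
      set v : EuclideanSpace ℝ (Fin d) × EuclideanSpace ℝ (Fin d) → ℝ := fun p => ‖p.1 - p.2‖ with hvdef
      have hvmeas : Measurable v := (measurable_fst.sub measurable_snd).norm
      have hptwise : ∀ p : EuclideanSpace ℝ (Fin d) × EuclideanSpace ℝ (Fin d), (‖v p + δ‖₊ : ℝ≥0∞) =
          (‖p.1 - p.2‖₊ : ℝ≥0∞) + ENNReal.ofReal δ := by
        intro p
        rw [← enorm_eq_nnnorm, Real.enorm_eq_ofReal (by positivity),
          ENNReal.ofReal_add (norm_nonneg _) hδpos.le, ofReal_norm, enorm_eq_nnnorm]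
      have hJeq : ∫⁻ p, ((‖p.1 - p.2‖₊ : ℝ≥0∞) + ENNReal.ofReal δ) ^ 2 ∂γ =
          ∫⁻ p, (‖v p + δ‖₊ : ℝ≥0∞) ^ 2 ∂γ := by
        apply lintegral_congr
        intro p
        rw [hptwise p]
      rw [hJeq, rpow_half_eq_eLpNorm γ (fun p => v p + δ)]
      have htri2 : eLpNorm (fun p => v p + δ) 2 γ ≤
          eLpNorm v 2 γ + eLpNorm (fun _ : EuclideanSpace ℝ (Fin d) × EuclideanSpace ℝ (Fin d) => δ) 2 γ :=
        eLpNorm_add_le hvmeas.aestronglyMeasurable aestronglyMeasurable_const one_le_two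
      have hv2 : eLpNorm v 2 γ = L := by
        rw [← rpow_half_eq_eLpNorm, hLdef]
        congr 1
        apply lintegral_congr
        intro p
        rw [hvdef]
        simp only [nnnorm_norm]
      have hconst : eLpNorm (fun _ : EuclideanSpace ℝ (Fin d) × EuclideanSpace ℝ (Fin d) => δ) 2 γ = ENNReal.ofReal δ := by
        rw [eLpNorm_const δ two_ne_zero (IsProbabilityMeasure.ne_zero γ), measure_univ,
          ENNReal.one_rpow, mul_one, Real.enorm_eq_ofReal hδpos.le]
      calc eLpNorm (fun p => v p + δ) 2 γ ≤ eLpNorm v 2 γ +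
            eLpNorm (fun _ : EuclideanSpace ℝ (Fin d) × EuclideanSpace ℝ (Fin d) => δ) 2 γ := htri2
        _ = L + ENNReal.ofReal δ := by rw [hv2, hconst]
    calc eLpNorm (fun ω => c ω - η ω) 2 ℙ
        = (∫⁻ ω, (‖c ω - η ω‖₊ : ℝ≥0∞) ^ 2 ∂ℙ) ^ (1/2 : ℝ) :=
          (rpow_half_eq_eLpNorm ℙ _).symm
      _ ≤ (∫⁻ p, ((‖p.1 - p.2‖₊ : ℝ≥0∞) + ENNReal.ofReal δ) ^ 2 ∂γ) ^ (1/2 : ℝ) :=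
          ENNReal.rpow_le_rpow hI (by norm_num)
      _ ≤ L + ENNReal.ofReal δ := hJ
  have hfinal : ENNReal.ofReal δ + (L + ENNReal.ofReal δ) < ENNReal.ofReal ε := by
    rw [← hLtoReal, ← ENNReal.ofReal_add ENNReal.toReal_nonneg hδpos.le,
      ← ENNReal.ofReal_add hδpos.le (by positivity)]
    rw [ENNReal.ofReal_lt_ofReal_iff hε]
    rw [hδdef]
    linarith
  exact lt_of_le_of_lt (htri.trans (add_le_add h1 h2)) hfinal
end

section
/- Let h : ℝ × 𝒫₂(ℝ) → ℝ be defined by h(x, m) = B(x − ∫ z dm(z))² with B > 0. Then h fails the Lasry–Lions monotonicity condition strictly: for any two square-integrable real random variables ξ, ξ' with 𝔼ξ ≠ 𝔼ξ', one has 𝔼[h(ξ', ℙ_{ξ'}) + h(ξ, ℙ_ξ) − h(ξ, ℙ_{ξ'}) − h(ξ', ℙ_ξ)] = −2B(𝔼ξ − 𝔼ξ')² < 0. -/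
/-!
The quadratic terms cancel in the Lasry–Lions combination: pointwise,
`(y - b)² + (x - a)² - (x - b)² - (y - a)² = 2 (b - a) (x - y)`, which is linear in `(x, y)`,
so only the means of `ξ, ξ'` survive integration; this holds for any measure and any `a, b`.
-/

open MeasureTheory

theorem integral_lasryLions_quadratic {Ω : Type*} [MeasurableSpace Ω] {μ : Measure Ω}
    {ξ ξ' : Ω → ℝ} (hξ : Integrable ξ μ) (hξ' : Integrable ξ' μ) (B a b : ℝ) :
    ∫ ω, (B * (ξ' ω - b) ^ 2 + B * (ξ ω - a) ^ 2 - B * (ξ ω - b) ^ 2 - B * (ξ' ω - a) ^ 2) ∂μ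
      = 2 * B * (b - a) * ((∫ ω, ξ ω ∂μ) - ∫ ω, ξ' ω ∂μ) := by
  calc _ = ∫ ω, 2 * B * (b - a) * (ξ ω - ξ' ω) ∂μ := by
          congr with ω
          ring
    _ = _ := by rw [integral_const_mul, integral_sub hξ hξ']

theorem stmt4_general {Ω : Type*} [MeasurableSpace Ω] (ℙ : Measure Ω) [IsProbabilityMeasure ℙ]
    (B : ℝ) (hB : 0 < B)
    (ξ ξ' : Ω → ℝ)
    (h2 : MemLp ξ 2 ℙ) (h2' : MemLp ξ' 2 ℙ)
    (hmean : (∫ ω, ξ ω ∂ℙ) ≠ ∫ ω, ξ' ω ∂ℙ) :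
    (∫ ω, (B * (ξ' ω - ∫ ω', ξ' ω' ∂ℙ) ^ 2 + B * (ξ ω - ∫ ω', ξ ω' ∂ℙ) ^ 2
        - B * (ξ ω - ∫ ω', ξ' ω' ∂ℙ) ^ 2 - B * (ξ' ω - ∫ ω', ξ ω' ∂ℙ) ^ 2) ∂ℙ)
      = -2 * B * ((∫ ω, ξ ω ∂ℙ) - ∫ ω, ξ' ω ∂ℙ) ^ 2 ∧
    -2 * B * ((∫ ω, ξ ω ∂ℙ) - ∫ ω, ξ' ω ∂ℙ) ^ 2 < 0 := by
  refine ⟨?_, ?_⟩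
  · rw [integral_lasryLions_quadratic (h2.integrable one_le_two) (h2'.integrable one_le_two)]
    ring
  · have hne : (∫ ω, ξ ω ∂ℙ) - ∫ ω, ξ' ω ∂ℙ ≠ 0 := sub_ne_zero.mpr hmean
    exact mul_neg_of_neg_of_pos (by linarith) (by positivity)

/-- For `h(x, m) = B(x − ∫ z dm(z))²` with `B > 0` and square-integrable real random
variables `ξ, ξ'` with `𝔼ξ ≠ 𝔼ξ'`, the Lasry–Lions quantity equals
`−2B(𝔼ξ − 𝔼ξ')²` and is strictly negative. -/
theorem stmt4 {Ω : Type*} [MeasurableSpace Ω] (ℙ : Measure Ω) [IsProbabilityMeasure ℙ]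
    (B : ℝ) (hB : 0 < B)
    (ξ ξ' : Ω → ℝ) (hξ : Measurable ξ) (hξ' : Measurable ξ')
    (h2 : MemLp ξ 2 ℙ) (h2' : MemLp ξ' 2 ℙ)
    (hmean : (∫ ω, ξ ω ∂ℙ) ≠ ∫ ω, ξ' ω ∂ℙ) :
    (∫ ω, (B * (ξ' ω - ∫ ω', ξ' ω' ∂ℙ) ^ 2 + B * (ξ ω - ∫ ω', ξ ω' ∂ℙ) ^ 2
        - B * (ξ ω - ∫ ω', ξ' ω' ∂ℙ) ^ 2 - B * (ξ' ω - ∫ ω', ξ ω' ∂ℙ) ^ 2) ∂ℙ)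
      = -2 * B * ((∫ ω, ξ ω ∂ℙ) - ∫ ω, ξ' ω ∂ℙ) ^ 2 ∧
    -2 * B * ((∫ ω, ξ ω ∂ℙ) - ∫ ω, ξ' ω ∂ℙ) ^ 2 < 0 :=
  stmt4_general ℙ B hB ξ ξ' h2 h2' hmean
end

section
/- Let q, q̄, s ∈ ℝ with q̄ s ≥ 0 and q + q̄ − q̄ s ≥ 0, and define φ : ℝ × 𝒫₂(ℝ) → ℝ by φ(x, m) = q x + q̄ (x − s ∫ z dm(z)) (the x-gradient of the linear–quadratic cost f(x,m) = ½(q x² + q̄ (x − s m̄)²)). Then φ is weakly monotone: for any square-integrable real random variables ξ, ξ', 𝔼[(φ(ξ, ℙ_ξ) − φ(ξ', ℙ_{ξ'}))(ξ − ξ')] ≥ 0. -/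
/-! Writing `d = ξ - ξ'`, the pairing expands to `(q + q̄) 𝔼[d²] - q̄ s (𝔼 d)²`. Since
`(𝔼 d)² ≤ 𝔼[d²]` (the variance of `d` is nonnegative), this is at least
`(q + q̄ - q̄ s) 𝔼[d²] ≥ 0`. -/

open MeasureTheory

section

open ProbabilityTheory

variable {Ω : Type*} [MeasurableSpace Ω] {μ : Measure Ω} [IsProbabilityMeasure μ] {X : Ω → ℝ}

theorem sq_integral_le_integral_sq (hX : MemLp X 2 μ) :
    (∫ ω, X ω ∂μ) ^ 2 ≤ ∫ ω, X ω ^ 2 ∂μ := by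
  have hvar := variance_eq_sub hX ▸ variance_nonneg X μ
  simpa only [Pi.pow_apply, sub_nonneg] using hvar

theorem mul_sq_integral_le_mul_integral_sq (hX : MemLp X 2 μ) {a b : ℝ} (hb : 0 ≤ b)
    (hba : b ≤ a) : b * (∫ ω, X ω ∂μ) ^ 2 ≤ a * ∫ ω, X ω ^ 2 ∂μ := by
  have hsq : 0 ≤ ∫ ω, X ω ^ 2 ∂μ := integral_nonneg fun ω => sq_nonneg (X ω)
  calc b * (∫ ω, X ω ∂μ) ^ 2 ≤ b * ∫ ω, X ω ^ 2 ∂μ :=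
        mul_le_mul_of_nonneg_left (sq_integral_le_integral_sq hX) hb
    _ ≤ a * ∫ ω, X ω ^ 2 ∂μ := mul_le_mul_of_nonneg_right hba hsq

end

theorem stmt5_general {Ω : Type*} [MeasurableSpace Ω] (ℙ : Measure Ω) [IsProbabilityMeasure ℙ]
    (q qbar s : ℝ) (h1 : 0 ≤ qbar * s) (h2 : 0 ≤ q + qbar - qbar * s)
    (ξ ξ' : Ω → ℝ)
    (hξ2 : MemLp ξ 2 ℙ) (hξ'2 : MemLp ξ' 2 ℙ) :
    0 ≤ ∫ ω, ((q * ξ ω + qbar * (ξ ω - s * ∫ ω', ξ ω' ∂ℙ))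
        - (q * ξ' ω + qbar * (ξ' ω - s * ∫ ω', ξ' ω' ∂ℙ))) * (ξ ω - ξ' ω) ∂ℙ := by
  set d : Ω → ℝ := fun ω => ξ ω - ξ' ω
  have hd : MemLp d 2 ℙ := hξ2.sub hξ'2
  have hmean : (∫ ω, ξ ω ∂ℙ) - ∫ ω, ξ' ω ∂ℙ = ∫ ω, d ω ∂ℙ :=
    (integral_sub (hξ2.integrable one_le_two) (hξ'2.integrable one_le_two)).symm
  have hexpand : ∫ ω, ((q * ξ ω + qbar * (ξ ω - s * ∫ ω', ξ ω' ∂ℙ))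
        - (q * ξ' ω + qbar * (ξ' ω - s * ∫ ω', ξ' ω' ∂ℙ))) * (ξ ω - ξ' ω) ∂ℙ
      = (q + qbar) * (∫ ω, d ω ^ 2 ∂ℙ) - qbar * s * (∫ ω, d ω ∂ℙ) ^ 2 := by
    rw [← hmean]
    calc _ = ∫ ω, ((q + qbar) * d ω ^ 2
            - (qbar * s * ((∫ ω, ξ ω ∂ℙ) - ∫ ω, ξ' ω ∂ℙ)) * d ω) ∂ℙ :=
          integral_congr_ae (Filter.Eventually.of_forall fun ω => by ring)
      _ = _ := by
          rw [integral_sub (hd.integrable_sq.const_mul _)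
              ((hd.integrable one_le_two).const_mul _),
            integral_const_mul, integral_const_mul, hmean]
          ring
  rw [hexpand, sub_nonneg]
  exact mul_sq_integral_le_mul_integral_sq hd h1 (by linarith)

/-- `φ(x, m) = q x + q̄ (x − s ∫ z dm(z))` is weakly monotone when `q̄ s ≥ 0` and
`q + q̄ − q̄ s ≥ 0`: `𝔼[(φ(ξ, ℙ_ξ) − φ(ξ', ℙ_{ξ'}))(ξ − ξ')] ≥ 0` for square-integrable
real random variables, where `∫ z dℙ_ξ(z) = 𝔼ξ`. -/
theorem stmt5 {Ω : Type*} [MeasurableSpace Ω] (ℙ : Measure Ω) [IsProbabilityMeasure ℙ]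
    (q qbar s : ℝ) (h1 : 0 ≤ qbar * s) (h2 : 0 ≤ q + qbar - qbar * s)
    (ξ ξ' : Ω → ℝ) (hξ : Measurable ξ) (hξ' : Measurable ξ')
    (hξ2 : MemLp ξ 2 ℙ) (hξ'2 : MemLp ξ' 2 ℙ) :
    0 ≤ ∫ ω, ((q * ξ ω + qbar * (ξ ω - s * ∫ ω', ξ ω' ∂ℙ))
        - (q * ξ' ω + qbar * (ξ' ω - s * ∫ ω', ξ' ω' ∂ℙ))) * (ξ ω - ξ' ω) ∂ℙ :=
  stmt5_general ℙ q qbar s h1 h2 ξ ξ' hξ2 hξ'2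
end

section
/- Let f : ℝ^n × ℝ^k → ℝ be differentiable with K-Lipschitz gradient ∂_α f in (x,α), and strongly convex with modulus c_f > 0 in the sense that f(x',α') ≥ f(x,α) + ⟨∂ₓf(x,α), x'−x⟩ + ⟨∂_α f(x,α), α'−α⟩ + c_f|α'−α|². For v ∈ ℝ^k and x ∈ ℝ^n, let ᾱ(x, v) denote the unique solution α of v + ∂_α f(x, α) = 0 (assumed to exist). Then there is a constant C depending only on K and c_f such that |ᾱ(x, v) − ᾱ(x', v')| ≤ C(|x − x'| + |v − v'|) for all x, x' ∈ ℝ^n and v, v' ∈ ℝ^k. -/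
open scoped RealInnerProductSpace

/-- Lipschitz continuity of the minimizer map `ᾱ(x, v)` defined by the first-order
condition `v + ∂_α f(x, ᾱ(x,v)) = 0`, for `f` strongly convex in `α` with `K`-Lipschitz
gradients. -/
theorem stmt9 {n k : ℕ}
    (f : EuclideanSpace ℝ (Fin n) → EuclideanSpace ℝ (Fin k) → ℝ)
    (gx : EuclideanSpace ℝ (Fin n) → EuclideanSpace ℝ (Fin k) → EuclideanSpace ℝ (Fin n))
    (ga : EuclideanSpace ℝ (Fin n) → EuclideanSpace ℝ (Fin k) → EuclideanSpace ℝ (Fin k))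
    (hgradx : ∀ x α, HasGradientAt (fun x' => f x' α) (gx x α) x)
    (hgrada : ∀ x α, HasGradientAt (fun α' => f x α') (ga x α) α)
    (K cf : ℝ) (hcf : 0 < cf)
    (hlipx : ∀ x α x' α', ‖gx x' α' - gx x α‖ ≤ K * (‖x' - x‖ + ‖α' - α‖))
    (hlipa : ∀ x α x' α', ‖ga x' α' - ga x α‖ ≤ K * (‖x' - x‖ + ‖α' - α‖))
    (hconv : ∀ x α x' α',
      f x' α' ≥ f x α + ⟪gx x α, x' - x⟫ + ⟪ga x α, α' - α⟫ + cf * ‖α' - α‖ ^ 2)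
    (abar : EuclideanSpace ℝ (Fin n) → EuclideanSpace ℝ (Fin k) → EuclideanSpace ℝ (Fin k))
    (hfoc : ∀ x v, v + ga x (abar x v) = 0) :
    ∃ C > 0, ∀ x x' v v',
      ‖abar x v - abar x' v'‖ ≤ C * (‖x - x'‖ + ‖v - v'‖) := by
  refine ⟨(|K| + 1) / (2 * cf), by positivity, ?_⟩
  intro x x' v v'
  set α := abar x v
  set α' := abar x' v'
  set d := ‖α - α'‖ with hd
  set D := ‖x - x'‖ with hD
  set V := ‖v - v'‖ with hV
  have hDpos : 0 ≤ D := norm_nonneg _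
  have hVpos : 0 ≤ V := norm_nonneg _
  have hdpos : 0 ≤ d := norm_nonneg _
  -- strong monotonicity in α (for fixed x)
  have hmono : 2 * cf * d ^ 2 ≤ ⟪ga x α' - ga x α, α' - α⟫ := by
    have h1 := hconv x α x α'
    have h2 := hconv x α' x α
    simp only [sub_self, inner_zero_right] at h1 h2
    have e3 : ⟪ga x α', α - α'⟫ = -⟪ga x α', α' - α⟫ := by
      rw [← inner_neg_right]; congr 1; abel
    have hn : ‖α' - α‖ = d := by rw [hd, norm_sub_rev]
    have hn2 : ‖α - α'‖ = d := hd.symm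
    rw [hn] at h1
    rw [hn2, e3] at h2
    rw [inner_sub_left]
    linarith
  -- first-order conditions
  have hfa : ga x α = -v := eq_neg_of_add_eq_zero_right (hfoc x v)
  have hfa' : ga x' α' = -v' := eq_neg_of_add_eq_zero_right (hfoc x' v')
  -- split
  have hsplit : ⟪ga x α' - ga x α, α' - α⟫
      = ⟪ga x α' - ga x' α', α' - α⟫ + ⟪v - v', α' - α⟫ := by
    rw [← inner_add_left]
    congr 1
    rw [hfa, hfa']
    abel
  have hb1 : ⟪ga x α' - ga x' α', α' - α⟫ ≤ |K| * D * d := by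
    calc ⟪ga x α' - ga x' α', α' - α⟫ ≤ ‖ga x α' - ga x' α'‖ * ‖α' - α‖ :=
          real_inner_le_norm _ _
      _ ≤ (|K| * D) * d := by
          rw [norm_sub_rev α']
          refine mul_le_mul ?_ le_rfl (norm_nonneg _) (by positivity)
          have := hlipa x' α' x α'
          calc ‖ga x α' - ga x' α'‖ ≤ K * (‖x - x'‖ + ‖α' - α'‖) := this
            _ = K * D := by simp [hD]
            _ ≤ |K| * D := mul_le_mul_of_nonneg_right (le_abs_self K) hDpos
      _ = |K| * D * d := by ring
  have hb2 : ⟪v - v', α' - α⟫ ≤ V * d := by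
    calc ⟪v - v', α' - α⟫ ≤ ‖v - v'‖ * ‖α' - α‖ := real_inner_le_norm _ _
      _ = V * d := by rw [norm_sub_rev α']
  have key : 2 * cf * d ^ 2 ≤ (|K| * D + V) * d := by
    calc 2 * cf * d ^ 2 ≤ ⟪ga x α' - ga x α, α' - α⟫ := hmono
      _ ≤ |K| * D * d + V * d := by rw [hsplit]; exact add_le_add hb1 hb2
      _ = (|K| * D + V) * d := by ring
  -- conclude
  rcases eq_or_lt_of_le hdpos with h0 | h0
  · rw [← h0]; positivity
  · have hdle : 2 * cf * d ≤ |K| * D + V := by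
      have := mul_le_mul_of_nonneg_right key (le_of_lt (inv_pos.mpr h0))
      calc 2 * cf * d = 2 * cf * d ^ 2 * d⁻¹ := by field_simp
        _ ≤ (|K| * D + V) * d * d⁻¹ := this
        _ = |K| * D + V := by field_simp
    rw [div_mul_eq_mul_div, le_div_iff₀ (by positivity)]
    nlinarith [abs_nonneg K]
end
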